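/- Let d ≥ 2 and let M and A be d×d complex matrices. Let v be a unit vector with Mv = λv for some λ ∈ ℂ, and let v' be a nonzero vector with (M+A)v' = λ'v' for some λ' ∈ ℂ. If the second smallest singular value s := ς_{−2}(M − λI) (singular values counted with multiplicity) is positive, then there exists c ∈ ℂ such that w := c·v' is a unit vector and ‖w − v‖ ≤ 2√2·(‖A‖ + |λ' − λ|)/s. -/

import Mathlib

open scoped ComplexOrder Matrix

namespace Stmt17

/-- The space of `d × d` complex matrices. -/
abbrev Mat (d : ℕ) := Matrix (Fin d) (Fin d) ℂ

/-- Operator (spectral) norm of a complex matrix. -/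
noncomputable def opNorm {m n : Type*} [Fintype m] [Fintype n] [DecidableEq n]
    (A : Matrix m n ℂ) : ℝ :=
  ‖LinearMap.toContinuousLinearMap (Matrix.toEuclideanLin A)‖

/-- The singular values of a matrix: square roots of the eigenvalues of `B†B`
(counted with multiplicity). -/
noncomputable def singVals {n : Type*} [Fintype n] [DecidableEq n] (B : Matrix n n ℂ) :
    n → ℝ :=
  fun i => Real.sqrt ((Matrix.isHermitian_conjTranspose_mul_self B).eigenvalues i)

/-- The second smallest value (with multiplicity) of a real family. -/
noncomputable def secondSmallest {ι : Type*} (f : ι → ℝ) : ℝ :=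
  sInf {x | ∃ i j, i ≠ j ∧ x = max (f i) (f j)}

/-- Euclidean norm of a complex vector. -/
noncomputable def vecNorm {n : Type*} [Fintype n] (v : n → ℂ) : ℝ :=
  Real.sqrt (∑ i, ‖v i‖ ^ 2)

end Stmt17

/-!
Put `B = M - λ • 1`, so that `B v = 0`. In an orthonormal eigenbasis of `Bᴴ B` we have
`‖B x‖² = ∑ σᵢ² |xᵢ|²`; as at most one singular value lies below `s = ς₋₂(B) > 0`, the unit
vector `v` is supported on the coordinate of the smallest one, and `B` is bounded below by `s`
on `v^⊥`. Writing `v' = α v + u` with `u ⊥ v`, we get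
`s ‖u‖ ≤ ‖B u‖ = ‖B v'‖ = ‖(λ' - λ) v' - A v'‖ ≤ (‖A‖ + |λ' - λ|) ‖v'‖`.
Finally, choosing the phase of `c` so that `⟪v, c • v'⟫ = cos θ ≥ 0` gives
`‖c • v' - v‖² = 2 - 2 cos θ ≤ 2 sin² θ = 2 ‖u‖² / ‖v'‖²`.
-/

open scoped InnerProductSpace

section InnerProductSpace
variable {E : Type*} [NormedAddCommGroup E] [InnerProductSpace ℂ E]

lemma norm_sub_inner_smul_sq {v : E} (hv : ‖v‖ = 1) (x : E) :
    ‖x - ⟪v, x⟫_ℂ • v‖ ^ 2 = ‖x‖ ^ 2 - ‖⟪v, x⟫_ℂ‖ ^ 2 := by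
  rw [@norm_sub_sq ℂ, inner_smul_right, norm_smul, hv, ← inner_conj_symm, RCLike.conj_mul,
    RCLike.norm_conj]
  norm_cast
  ring

lemma exists_norm_smul_eq_one_and_norm_smul_sub_le {v x : E} (hv : ‖v‖ = 1) (hx : x ≠ 0) :
    ∃ c : ℂ, ‖c • x‖ = 1 ∧ ‖c • x - v‖ ≤ √2 * ‖x - ⟪v, x⟫_ℂ • v‖ / ‖x‖ := by
  set α := ⟪v, x⟫_ℂ
  have hx₀ : 0 < ‖x‖ := norm_pos_iff.2 hx
  set t := ‖α‖ / ‖x‖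
  have ht₀ : 0 ≤ t := by positivity
  have ht₁ : t ≤ 1 := by
    rw [div_le_one hx₀]
    simpa [hv] using norm_inner_le_norm (𝕜 := ℂ) v x
  set c : ℂ := ‖x‖⁻¹ * Complex.exp (↑(-α.arg) * Complex.I)
  have hc : ‖c‖ = ‖x‖⁻¹ := by
    simp only [c, norm_mul, Complex.norm_exp_ofReal_mul_I, Complex.norm_real, norm_inv,
      norm_norm, mul_one]
  have hcα : c * α = t := by
    conv_lhs => rw [← Complex.norm_mul_exp_arg_mul_I α]
    have hexp : Complex.exp (-α.arg * Complex.I) * Complex.exp (α.arg * Complex.I) = 1 := by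
      rw [← Complex.exp_add, neg_mul, neg_add_cancel, Complex.exp_zero]
    simp only [c, t]
    push_cast
    linear_combination ((‖x‖ : ℂ)⁻¹ * ‖α‖) * hexp
  refine ⟨c, by rw [norm_smul, hc, inv_mul_cancel₀ hx₀.ne'], ?_⟩
  have hdist : ‖c • x - v‖ ^ 2 = 2 - 2 * t := by
    rw [@norm_sub_sq ℂ, norm_smul, hc, inv_mul_cancel₀ hx₀.ne', hv, inner_smul_left,
      ← inner_conj_symm, ← map_mul, RCLike.conj_re, hcα, RCLike.re_to_complex, Complex.ofReal_re]
    ring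
  have horth : ‖x - α • v‖ ^ 2 / ‖x‖ ^ 2 = 1 - t ^ 2 := by
    rw [norm_sub_inner_smul_sq hv, div_pow]
    field_simp
    rfl
  rw [mul_div_assoc, ← Real.sqrt_sq (div_nonneg (norm_nonneg _) hx₀.le),
    ← Real.sqrt_mul zero_le_two, div_pow, horth, Real.le_sqrt (norm_nonneg _) (by nlinarith),
    hdist]
  nlinarith

end InnerProductSpace

lemma Matrix.IsHermitian.eigenvectorBasis_repr_toEuclideanLin {n : Type*} [Fintype n]
    [DecidableEq n] {A : Matrix n n ℂ} (hA : A.IsHermitian) (x : EuclideanSpace ℂ n) (i : n) :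
    hA.eigenvectorBasis.repr (Matrix.toEuclideanLin A x) i =
      hA.eigenvalues i * hA.eigenvectorBasis.repr x i := by
  have hsymm : (Matrix.toEuclideanLin A).IsSymmetric :=
    Matrix.isSymmetric_toEuclideanLin_iff.mpr hA
  have heig : Matrix.toEuclideanLin A (hA.eigenvectorBasis i) =
      (hA.eigenvalues i : ℂ) • hA.eigenvectorBasis i := by
    ext j
    simpa [Matrix.toLpLin_apply] using congrFun (hA.mulVec_eigenvectorBasis i) j
  rw [OrthonormalBasis.repr_apply_apply, OrthonormalBasis.repr_apply_apply, ← hsymm, heig,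
    inner_smul_left, Complex.conj_ofReal]

namespace Stmt17

lemma secondSmallest_le_max {ι : Type*} [Finite ι] (f : ι → ℝ) {i j : ι} (hij : i ≠ j) :
    secondSmallest f ≤ max (f i) (f j) := by
  refine csInf_le ?_ ⟨i, j, hij, rfl⟩
  refine ((Set.finite_range fun p : ι × ι => max (f p.1) (f p.2)).subset ?_).bddBelow
  rintro _ ⟨i, j, -, rfl⟩
  exact ⟨(i, j), rfl⟩

lemma exists_forall_ne_secondSmallest_le {ι : Type*} [Finite ι] [Nonempty ι] (f : ι → ℝ) :
    ∃ i₀, ∀ j ≠ i₀, secondSmallest f ≤ f j := by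
  obtain ⟨i₀, hi₀⟩ := Finite.exists_min f
  exact ⟨i₀, fun j hj => (secondSmallest_le_max f hj).trans_eq (max_eq_left (hi₀ j))⟩

section SingularValues
variable {n : Type*} [Fintype n] [DecidableEq n] (B : Matrix n n ℂ)

noncomputable abbrev rightSingularBasis : OrthonormalBasis n ℂ (EuclideanSpace ℂ n) :=
  (Matrix.isHermitian_conjTranspose_mul_self B).eigenvectorBasis

lemma singVals_sq (i : n) :
    singVals B i ^ 2 = (Matrix.isHermitian_conjTranspose_mul_self B).eigenvalues i :=
  Real.sq_sqrt (Matrix.eigenvalues_conjTranspose_mul_self_nonneg B i)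

lemma norm_toEuclideanLin_sq (x : EuclideanSpace ℂ n) :
    ‖Matrix.toEuclideanLin B x‖ ^ 2 =
      ∑ i, singVals B i ^ 2 * ‖(rightSingularBasis B).repr x i‖ ^ 2 := by
  have hadj : ⟪Matrix.toEuclideanLin B x, Matrix.toEuclideanLin B x⟫_ℂ =
      ⟪x, Matrix.toEuclideanLin (Bᴴ * B) x⟫_ℂ := by
    rw [Matrix.toLpLin_mul_same, LinearMap.comp_apply,
      Matrix.toEuclideanLin_conjTranspose_eq_adjoint, LinearMap.adjoint_inner_right]
  rw [← inner_self_eq_norm_sq (𝕜 := ℂ), hadj, ← (rightSingularBasis B).repr.inner_map_map,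
    PiLp.inner_apply, map_sum]
  refine Finset.sum_congr rfl fun i _ => ?_
  rw [Matrix.IsHermitian.eigenvectorBasis_repr_toEuclideanLin, ← singVals_sq, RCLike.inner_apply,
    mul_assoc, Complex.mul_conj, ← Complex.ofReal_mul, RCLike.re_to_complex, Complex.ofReal_re,
    Complex.normSq_eq_norm_sq]

lemma secondSmallest_singVals_mul_norm_le {v u : EuclideanSpace ℂ n}
    (hs : 0 < secondSmallest (singVals B)) (hv : v ≠ 0) (hBv : Matrix.toEuclideanLin B v = 0)
    (hvu : ⟪v, u⟫_ℂ = 0) :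
    secondSmallest (singVals B) * ‖u‖ ≤ ‖Matrix.toEuclideanLin B u‖ := by
  set s := secondSmallest (singVals B)
  set b := rightSingularBasis B
  have : Nonempty n := by
    by_contra h
    rw [not_nonempty_iff] at h
    exact hv (Subsingleton.elim _ _)
  obtain ⟨i₀, hi₀⟩ := exists_forall_ne_secondSmallest_le (singVals B)
  have hv_repr : ∀ j ≠ i₀, b.repr v j = 0 := by
    have h0 := norm_toEuclideanLin_sq B v
    rw [hBv, norm_zero, zero_pow two_ne_zero, eq_comm,
      Finset.sum_eq_zero_iff_of_nonneg fun _ _ => by positivity] at h0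
    intro j hj
    simpa [(hs.trans_le (hi₀ j hj)).ne'] using h0 j (Finset.mem_univ j)
  have hv_i₀ : b.repr v i₀ ≠ 0 := by
    refine fun h => hv (b.repr.injective ?_)
    ext j
    by_cases hj : j = i₀
    · simp [hj, h]
    · simp [hv_repr j hj]
  have hu_i₀ : b.repr u i₀ = 0 := by
    have h := b.repr.inner_map_map v u
    rw [hvu, PiLp.inner_apply, Finset.sum_eq_single i₀ (fun j _ hj => by simp [hv_repr j hj])
      (by simp)] at h
    simpa [hv_i₀] using h
  have hsq : (s * ‖u‖) ^ 2 ≤ ‖Matrix.toEuclideanLin B u‖ ^ 2 := by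
    rw [norm_toEuclideanLin_sq, mul_pow, ← b.repr.norm_map u, EuclideanSpace.norm_sq_eq,
      Finset.mul_sum]
    refine Finset.sum_le_sum fun j _ => ?_
    by_cases hj : j = i₀
    · rw [hj, hu_i₀, norm_zero, zero_pow two_ne_zero, mul_zero]
      positivity
    · gcongr
      exact hi₀ j hj
  exact (pow_le_pow_iff_left₀ (by positivity) (norm_nonneg _) two_ne_zero).1 hsq

theorem exists_norm_smul_eq_one_and_norm_smul_sub_le_of_toEuclideanLin_eq_zero
    (hs : 0 < secondSmallest (singVals B)) {v x : EuclideanSpace ℂ n} (hv : ‖v‖ = 1)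
    (hBv : Matrix.toEuclideanLin B v = 0) (hx : x ≠ 0) :
    ∃ c : ℂ, ‖c • x‖ = 1 ∧
      ‖c • x - v‖ ≤ √2 * ‖Matrix.toEuclideanLin B x‖ / (secondSmallest (singVals B) * ‖x‖) := by
  obtain ⟨c, hc1, hc⟩ := exists_norm_smul_eq_one_and_norm_smul_sub_le hv hx
  refine ⟨c, hc1, hc.trans ?_⟩
  have hvu : ⟪v, x - ⟪v, x⟫_ℂ • v⟫_ℂ = 0 := by
    rw [inner_sub_right, inner_smul_right, inner_self_eq_norm_sq_to_K, hv]
    simp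
  have hBu : Matrix.toEuclideanLin B (x - ⟪v, x⟫_ℂ • v) = Matrix.toEuclideanLin B x := by
    rw [map_sub, map_smul, hBv, smul_zero, sub_zero]
  have hu : secondSmallest (singVals B) * ‖x - ⟪v, x⟫_ℂ • v‖ ≤ ‖Matrix.toEuclideanLin B x‖ :=
    hBu ▸ secondSmallest_singVals_mul_norm_le B hs (norm_ne_zero_iff.1 (hv ▸ one_ne_zero)) hBv hvu
  rw [mul_div_assoc, mul_div_assoc, ← div_div]
  gcongr
  rwa [le_div_iff₀ hs, mul_comm]

end SingularValues

lemma vecNorm_eq_norm_toLp {n : Type*} [Fintype n] (x : n → ℂ) :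
    vecNorm x = ‖WithLp.toLp 2 x‖ := by
  rw [EuclideanSpace.norm_eq]
  rfl

lemma norm_toEuclideanLin_le_opNorm {m n : Type*} [Fintype m] [Fintype n] [DecidableEq n]
    (A : Matrix m n ℂ) (x : EuclideanSpace ℂ n) :
    ‖Matrix.toEuclideanLin A x‖ ≤ opNorm A * ‖x‖ :=
  (LinearMap.toContinuousLinearMap (Matrix.toEuclideanLin A)).le_opNorm x

lemma norm_toEuclideanLin_sub_smul_one_le {n : Type*} [Fintype n] [DecidableEq n]
    (M A : Matrix n n ℂ) (lam lam' : ℂ) {x : EuclideanSpace ℂ n}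
    (hx : Matrix.toEuclideanLin (M + A) x = lam' • x) :
    ‖Matrix.toEuclideanLin (M - lam • 1) x‖ ≤ (opNorm A + ‖lam' - lam‖) * ‖x‖ := by
  have hMx : Matrix.toEuclideanLin (M - lam • 1) x =
      (lam' - lam) • x - Matrix.toEuclideanLin A x := by
    rw [map_add, LinearMap.add_apply] at hx
    rw [map_sub, map_smul, Matrix.toLpLin_one, LinearMap.sub_apply, LinearMap.smul_apply,
      LinearMap.id_apply, sub_smul, ← hx]
    abel
  rw [hMx, add_mul, add_comm]
  refine (norm_sub_le _ _).trans ?_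
  rw [norm_smul]
  gcongr
  exact norm_toEuclideanLin_le_opNorm A x

theorem stmt17_general (d : ℕ) (M A : Mat d) (lam lam' : ℂ)
    (v : Fin d → ℂ) (hv : vecNorm v = 1) (hMv : M.mulVec v = lam • v)
    (v' : Fin d → ℂ) (hv' : v' ≠ 0) (hMv' : (M + A).mulVec v' = lam' • v')
    (hs : 0 < secondSmallest (singVals (M - lam • (1 : Mat d)))) :
    ∃ c : ℂ, vecNorm (c • v') = 1 ∧
      vecNorm (c • v' - v) ≤
        2 * Real.sqrt 2 * (opNorm A + ‖lam' - lam‖) /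
          secondSmallest (singVals (M - lam • (1 : Mat d))) := by
  set B := M - lam • (1 : Mat d)
  set s := secondSmallest (singVals B)
  set K := opNorm A + ‖lam' - lam‖
  set X : EuclideanSpace ℂ (Fin d) := WithLp.toLp 2 v'
  have hX : X ≠ 0 := by simpa [X] using hv'
  have hBv : Matrix.toEuclideanLin B (WithLp.toLp 2 v) = 0 := by simp [B, hMv]
  have hBX : ‖Matrix.toEuclideanLin B X‖ ≤ K * ‖X‖ :=
    norm_toEuclideanLin_sub_smul_one_le M A lam lam' (congrArg (WithLp.toLp 2) hMv')
  obtain ⟨c, hc1, hc⟩ := exists_norm_smul_eq_one_and_norm_smul_sub_le_of_toEuclideanLin_eq_zero B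
    hs (by rwa [← vecNorm_eq_norm_toLp]) hBv hX
  refine ⟨c, by rwa [vecNorm_eq_norm_toLp], ?_⟩
  have hK : 0 ≤ K := add_nonneg (norm_nonneg _) (norm_nonneg _)
  rw [vecNorm_eq_norm_toLp, WithLp.toLp_sub, WithLp.toLp_smul]
  calc ‖c • X - WithLp.toLp 2 v‖
      ≤ √2 * ‖Matrix.toEuclideanLin B X‖ / (s * ‖X‖) := hc
    _ ≤ √2 * (K * ‖X‖) / (s * ‖X‖) := by gcongr
    _ = √2 * K / s := by field_simp
    _ ≤ 2 * √2 * K / s := by gcongr; norm_num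

/-- Eigenvector perturbation: if `Mv = λv` with `v` a unit vector and
`(M+A)v' = λ'v'`, then `v'` can be normalized to a unit vector `w = c·v'` with
`‖w - v‖ ≤ 2√2·(‖A‖ + |λ'-λ|)/ς₋₂(M - λI)`. -/
theorem stmt17 (d : ℕ) (hd : 2 ≤ d) (M A : Mat d) (lam lam' : ℂ)
    (v : Fin d → ℂ) (hv : vecNorm v = 1) (hMv : M.mulVec v = lam • v)
    (v' : Fin d → ℂ) (hv' : v' ≠ 0) (hMv' : (M + A).mulVec v' = lam' • v')
    (hs : 0 < secondSmallest (singVals (M - lam • (1 : Mat d)))) :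
    ∃ c : ℂ, vecNorm (c • v') = 1 ∧
      vecNorm (c • v' - v) ≤
        2 * Real.sqrt 2 * (opNorm A + ‖lam' - lam‖) /
          secondSmallest (singVals (M - lam • (1 : Mat d))) :=
  stmt17_general d M A lam lam' v hv hMv v' hv' hMv' hs

end Stmt17
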